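/- Let [B,i,j] be a framed representation on V¹ and [B',i',j'] a framed representation on V². If [B',i',j'] is stable, then the map σ : L(V¹,V²) → E(V¹,V²) ⊕ L(W,V²) ⊕ L(V¹,W) is injective. -/
import Mathlib


noncomputable section

/-- If `[B',i',j']` is stable, then `σ` is injective. -/
theorem stmt1
    {I H : Type} [Fintype I] [Fintype H]
    (s t : H → I) (bar : H → H)
    (bar_invol : ∀ h, bar (bar h) = h) (bar_ne : ∀ h, bar h ≠ h)
    (s_bar : ∀ h, s (bar h) = t h) (t_bar : ∀ h, t (bar h) = s h)
    (eps : H → ℤ) (eps_pm : ∀ h, eps h = 1 ∨ eps h = -1)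
    (eps_bar : ∀ h, eps (bar h) = - eps h)
    (V1 V2 W : I → Type)
    [∀ i, AddCommGroup (V1 i)] [∀ i, Module ℂ (V1 i)] [∀ i, FiniteDimensional ℂ (V1 i)]
    [∀ i, AddCommGroup (V2 i)] [∀ i, Module ℂ (V2 i)] [∀ i, FiniteDimensional ℂ (V2 i)]
    [∀ i, AddCommGroup (W i)] [∀ i, Module ℂ (W i)] [∀ i, FiniteDimensional ℂ (W i)]
    (B : ∀ h, V1 (s h) →ₗ[ℂ] V1 (t h)) (iV : ∀ i, W i →ₗ[ℂ] V1 i) (jV : ∀ i, V1 i →ₗ[ℂ] W i)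
    (B' : ∀ h, V2 (s h) →ₗ[ℂ] V2 (t h)) (iV' : ∀ i, W i →ₗ[ℂ] V2 i) (jV' : ∀ i, V2 i →ₗ[ℂ] W i)
    -- stability of [B', iV', jV']
    (hstab : ∀ S : ∀ i, Submodule ℂ (V2 i),
      (∀ h, (S (s h)).map (B' h) ≤ S (t h)) →
      (∀ i, S i ≤ LinearMap.ker (jV' i)) →
      ∀ i, S i = ⊥) :
    Function.Injective (fun ξ : ∀ i, V1 i →ₗ[ℂ] V2 i =>
      ((fun h => B' h ∘ₗ ξ (s h) - ξ (t h) ∘ₗ B h : ∀ h, V1 (s h) →ₗ[ℂ] V2 (t h)),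
       (fun i => -(ξ i ∘ₗ iV i) : ∀ i, W i →ₗ[ℂ] V2 i),
       (fun i => jV' i ∘ₗ ξ i : ∀ i, V1 i →ₗ[ℂ] W i))) := by
  intro ξ η hmk
  simp only [Prod.mk.injEq] at hmk
  obtain ⟨h1, _, h3⟩ := hmk
  have hB : ∀ h, B' h ∘ₗ (ξ (s h) - η (s h)) = (ξ (t h) - η (t h)) ∘ₗ B h := by
    intro h
    ext x
    have hx := LinearMap.congr_fun (congrFun h1 h) x
    simp only [LinearMap.sub_apply, LinearMap.comp_apply] at hx ⊢
    rw [map_sub]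
    exact sub_eq_sub_iff_sub_eq_sub.mp hx
  have hJ : ∀ i, jV' i ∘ₗ (ξ i - η i) = 0 := by
    intro i
    ext x
    have hx := LinearMap.congr_fun (congrFun h3 i) x
    simp only [LinearMap.comp_apply] at hx
    simp [map_sub, hx]
  have hbot := hstab (fun i => LinearMap.range (ξ i - η i))
    (by
      intro h
      rw [← LinearMap.range_comp, hB h, LinearMap.range_comp]
      exact LinearMap.map_le_range)
    (by
      intro i x hx
      obtain ⟨v, rfl⟩ := hx
      have := LinearMap.congr_fun (hJ i) v
      simpa [LinearMap.mem_ker] using this)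
  funext i
  have : ξ i - η i = 0 := LinearMap.range_eq_bot.mp (hbot i)
  exact sub_eq_zero.mp this
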